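/- Let H, K be Hilbert spaces, K̃ : K → H bounded, S : K → K bounded self-adjoint, R = K̃* K̃ assumed to be a compact nonnegative operator admitting a square root R^{1/2}, and suppose K̃ S K̃* is compact. Then for every k, the k-th singular value of G = K̃ S K̃* equals the k-th singular value of P = R^{1/2} S R^{1/2}; that is, s_k(G) = s_k(R^{1/2} S R^{1/2}). -/

import Mathlib

/-!
Since `R^{1/2} R^{1/2} = K̃* K̃`, we have `‖K̃ x‖ = ‖R^{1/2} x‖`, so `K̃ = W R^{1/2}` for a
contraction `W` (the partial isometry of the polar decomposition of `K̃`), and `W* W` fixes the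
range of `R^{1/2}`. Hence `G = W P W*` and `P = W* G W` with `P = R^{1/2} S R^{1/2}`, and
approximation numbers do not increase under composition with contractions.
-/

open ContinuousLinearMap

/-- The `k`-th singular value (approximation number) of a bounded operator between Hilbert
spaces: the distance from `T` to the operators of rank at most `k`. For compact operators on
Hilbert spaces this coincides with the `k`-th singular value (eigenvalues of `(T*T)^{1/2}`
in nonincreasing order, indexed from `0`). -/
noncomputable def singularValue {E F : Type*}
    [NormedAddCommGroup E] [InnerProductSpace ℂ E]
    [NormedAddCommGroup F] [InnerProductSpace ℂ F]
    (T : E →L[ℂ] F) (k : ℕ) : ℝ :=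
  sInf {r : ℝ | ∃ A : E →L[ℂ] F,
    Module.rank ℂ (LinearMap.range (A : E →ₗ[ℂ] F)) ≤ (k : Cardinal) ∧ r = ‖T - A‖}

section SingularValue

variable {E F E' F' : Type*}
  [NormedAddCommGroup E] [InnerProductSpace ℂ E] [NormedAddCommGroup F] [InnerProductSpace ℂ F]
  [NormedAddCommGroup E'] [InnerProductSpace ℂ E'] [NormedAddCommGroup F'] [InnerProductSpace ℂ F']
  {k : ℕ}

lemma singularValue_le_norm_sub (T : E →L[ℂ] F) {A : E →L[ℂ] F}
    (hA : Module.rank ℂ (LinearMap.range (A : E →ₗ[ℂ] F)) ≤ k) :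
    singularValue T k ≤ ‖T - A‖ :=
  csInf_le ⟨0, by rintro _ ⟨B, -, rfl⟩; positivity⟩ ⟨A, hA, rfl⟩

lemma le_singularValue {T : E →L[ℂ] F} {r : ℝ}
    (h : ∀ A : E →L[ℂ] F, Module.rank ℂ (LinearMap.range (A : E →ₗ[ℂ] F)) ≤ k → r ≤ ‖T - A‖) :
    r ≤ singularValue T k :=
  le_csInf ⟨_, 0, by simp, rfl⟩ (by rintro _ ⟨A, hA, rfl⟩; exact h A hA)

lemma rank_range_comp_comp_le (U : F →L[ℂ] F') {A : E →L[ℂ] F} (V : E' →L[ℂ] E)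
    (hA : Module.rank ℂ (LinearMap.range (A : E →ₗ[ℂ] F)) ≤ k) :
    Module.rank ℂ (LinearMap.range ((U ∘L A ∘L V : E' →L[ℂ] F') : E' →ₗ[ℂ] F')) ≤ k := by
  have hAV : LinearMap.rank ((A : E →ₗ[ℂ] F) ∘ₗ (V : E' →ₗ[ℂ] E)) ≤ k :=
    (LinearMap.rank_comp_le_left _ _).trans hA
  exact Cardinal.lift_le_nat_iff.mp <|
    (LinearMap.lift_rank_comp_le_right _ (U : F →ₗ[ℂ] F')).trans (Cardinal.lift_le_nat_iff.mpr hAV)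

lemma singularValue_comp_comp_le (U : F →L[ℂ] F') (T : E →L[ℂ] F) (V : E' →L[ℂ] E)
    (hU : ‖U‖ ≤ 1) (hV : ‖V‖ ≤ 1) : singularValue (U ∘L T ∘L V) k ≤ singularValue T k := by
  refine le_singularValue fun A hA => ?_
  calc singularValue (U ∘L T ∘L V) k ≤ ‖U ∘L T ∘L V - U ∘L A ∘L V‖ :=
        singularValue_le_norm_sub _ (rank_range_comp_comp_le U V hA)
    _ = ‖U ∘L (T - A) ∘L V‖ := by rw [sub_comp, comp_sub]
    _ ≤ ‖U‖ * (‖T - A‖ * ‖V‖) :=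
        (opNorm_comp_le _ _).trans (by gcongr; exact opNorm_comp_le _ _)
    _ ≤ 1 * (‖T - A‖ * 1) := by gcongr
    _ = ‖T - A‖ := by ring

end SingularValue

section Contraction

variable {E F G : Type*}
  [NormedAddCommGroup E] [InnerProductSpace ℂ E] [NormedAddCommGroup F] [InnerProductSpace ℂ F]
  [NormedAddCommGroup G] [InnerProductSpace ℂ G]

lemma norm_apply_eq_of_adjoint_comp_self_eq [CompleteSpace E] [CompleteSpace F] [CompleteSpace G]
    {A : E →L[ℂ] F} {B : E →L[ℂ] G}
    (h : adjoint A ∘L A = adjoint B ∘L B) (x : E) : ‖A x‖ = ‖B x‖ := by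
  rw [apply_norm_eq_sqrt_inner_adjoint_left, apply_norm_eq_sqrt_inner_adjoint_left, h]

/-- Equality in `‖T z‖ ≤ ‖z‖` forces `T* T z = z`, since `‖T* T z - z‖² ≤ ‖z‖² - ‖T z‖²`. -/
lemma adjoint_comp_self_apply_eq_of_norm_apply_eq [CompleteSpace E] [CompleteSpace F]
    {T : E →L[ℂ] F} (hT : ‖T‖ ≤ 1) {z : E} (hz : ‖T z‖ = ‖z‖) : adjoint T (T z) = z := by
  have hinner : RCLike.re (inner ℂ (adjoint T (T z)) z) = ‖z‖ ^ 2 := by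
    rw [adjoint_inner_left, ← hz, inner_self_eq_norm_sq]
  have hle : ‖adjoint T (T z)‖ ≤ ‖z‖ := by
    calc ‖adjoint T (T z)‖ ≤ ‖adjoint T‖ * ‖T z‖ := le_opNorm _ _
      _ ≤ 1 * ‖z‖ := by rw [LinearIsometryEquiv.norm_map, hz]; gcongr
      _ = ‖z‖ := one_mul _
  have hsq : ‖adjoint T (T z) - z‖ ^ 2 ≤ 0 := by
    rw [@norm_sub_sq ℂ, hinner]
    nlinarith [norm_nonneg (adjoint T (T z))]
  rw [← sub_eq_zero, ← norm_eq_zero]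
  exact (pow_eq_zero_iff two_ne_zero).mp (hsq.antisymm (sq_nonneg _))

/-- Douglas factorization for contractions: `W` is built on the closure of the range of `A`
by extending `A x ↦ B x` and is `0` on its orthogonal complement. -/
lemma exists_norm_le_one_comp_eq [CompleteSpace F] [CompleteSpace G]
    (A : E →L[ℂ] F) (B : E →L[ℂ] G) (h : ∀ x, ‖B x‖ ≤ ‖A x‖) :
    ∃ W : F →L[ℂ] G, ‖W‖ ≤ 1 ∧ W ∘L A = B := by
  set C := (LinearMap.range (A : E →ₗ[ℂ] F)).topologicalClosure
  have hmem : ∀ x, A x ∈ C := fun x => Submodule.le_topologicalClosure _ ⟨x, rfl⟩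
  set e : E →ₗ[ℂ] C := (A : E →ₗ[ℂ] F).codRestrict C hmem
  have he : DenseRange e := by
    intro y
    rw [Topology.IsInducing.subtypeVal.closure_eq_preimage_closure_image, ← Set.range_comp]
    exact y.2
  have hB : ∀ x, ‖(B : E →ₗ[ℂ] G) x‖ ≤ 1 * ‖e x‖ := fun x => (h x).trans_eq (one_mul _).symm
  set V := (B : E →ₗ[ℂ] G).extendOfNorm e
  refine ⟨V ∘L C.orthogonalProjectionOnto, ?_, ?_⟩
  · calc ‖V ∘L C.orthogonalProjectionOnto‖ ≤ ‖V‖ * ‖C.orthogonalProjectionOnto‖ :=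
          opNorm_comp_le _ _
      _ ≤ 1 * 1 := by
        gcongr
        · exact LinearMap.opNorm_extendOfNorm_le he zero_le_one hB
        · exact C.orthogonalProjectionOnto_norm_le
      _ = 1 := one_mul _
  · ext x
    have hproj : C.orthogonalProjectionOnto (A x) = e x :=
      C.orthogonalProjectionOnto_mem_subspace_eq_self (e x)
    rw [comp_apply, comp_apply, hproj, LinearMap.extendOfNorm_eq he ⟨1, hB⟩]
    rfl

end Contraction

theorem statement11_general {H K : Type*}
    [NormedAddCommGroup H] [InnerProductSpace ℂ H] [CompleteSpace H]
    [NormedAddCommGroup K] [InnerProductSpace ℂ K] [CompleteSpace K]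
    (Kt : K →L[ℂ] H) (S : K →L[ℂ] K)
    (Rsq : K →L[ℂ] K) (hRsq : IsSelfAdjoint Rsq)
    (hRoot : Rsq ∘L Rsq = adjoint Kt ∘L Kt) :
    ∀ k : ℕ, singularValue (Kt ∘L S ∘L adjoint Kt) k = singularValue (Rsq ∘L S ∘L Rsq) k := by
  intro k
  have hRsq' : adjoint Rsq = Rsq := hRsq.adjoint_eq
  have hnorm : ∀ x, ‖Kt x‖ = ‖Rsq x‖ :=
    norm_apply_eq_of_adjoint_comp_self_eq (by rw [hRsq', hRoot])
  obtain ⟨W, hW, hWR⟩ := exists_norm_le_one_comp_eq Rsq Kt fun x => (hnorm x).le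
  have hW' : ‖adjoint W‖ ≤ 1 := by rwa [LinearIsometryEquiv.norm_map]
  have hWWR : adjoint W ∘L W ∘L Rsq = Rsq := ContinuousLinearMap.ext fun x =>
    adjoint_comp_self_apply_eq_of_norm_apply_eq hW (z := Rsq x)
      (by rw [← hnorm x, ← hWR, comp_apply])
  have hRWW : Rsq ∘L adjoint W ∘L W = Rsq := by
    simpa only [adjoint_comp, adjoint_adjoint, hRsq', comp_assoc] using congrArg adjoint hWWR
  have hG : Kt ∘L S ∘L adjoint Kt = W ∘L (Rsq ∘L S ∘L Rsq) ∘L adjoint W := by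
    rw [← hWR, adjoint_comp, hRsq']; simp only [comp_assoc]
  have hP : adjoint W ∘L (Kt ∘L S ∘L adjoint Kt) ∘L W = Rsq ∘L S ∘L Rsq := by
    calc _ = (adjoint W ∘L W ∘L Rsq) ∘L S ∘L (Rsq ∘L adjoint W ∘L W) := by
          simp only [hG, comp_assoc]
      _ = Rsq ∘L S ∘L Rsq := by rw [hWWR, hRWW]
  apply le_antisymm
  · simpa only [hG] using singularValue_comp_comp_le W (Rsq ∘L S ∘L Rsq) (adjoint W) hW hW'
  · simpa only [hP] using singularValue_comp_comp_le (adjoint W) (Kt ∘L S ∘L adjoint Kt) W hW' hW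

/-- with `R = K̃*K̃ ≥ 0` having a square root `R^{1/2}`, the singular values of
the compact operator `G = K̃ S K̃*` coincide with those of `R^{1/2} S R^{1/2}`. -/
theorem statement11 {H K : Type*}
    [NormedAddCommGroup H] [InnerProductSpace ℂ H] [CompleteSpace H]
    [NormedAddCommGroup K] [InnerProductSpace ℂ K] [CompleteSpace K]
    (Kt : K →L[ℂ] H) (S : K →L[ℂ] K) (hS : IsSelfAdjoint S)
    (Rsq : K →L[ℂ] K) (hRsq : IsSelfAdjoint Rsq)
    (hRsqNonneg : ∀ f : K, 0 ≤ (inner ℂ (Rsq f) f : ℂ).re)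
    (hRoot : Rsq ∘L Rsq = adjoint Kt ∘L Kt)
    (hGcompact : IsCompactOperator (Kt ∘L S ∘L adjoint Kt))
    (hPcompact : IsCompactOperator (Rsq ∘L S ∘L Rsq)) :
    ∀ k : ℕ, singularValue (Kt ∘L S ∘L adjoint Kt) k = singularValue (Rsq ∘L S ∘L Rsq) k :=
  statement11_general Kt S Rsq hRsq hRoot
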